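/- Let K be the field of fractions of ℚ[u,v] and let d be a ℚ-linear derivation of K satisfying d(u) = v² and d(v) = v. Then in the formal power series ring K[[t]], (Σ_{n≥0} d^n(u^{-1}v) tⁿ/n!) · (u · Σ_{m≥0} t^{2m}/(2m)! + (v²-u) · Σ_{m≥0} t^{2m+1}/(2m+1)!) = v; that is, Σ_{n≥0} d^n(u^{-1}v) tⁿ/n! = v/(u·cosh(t) + (v²-u)·sinh(t)). -/

import Mathlib

open MvPolynomial

/-- The field of fractions of `ℚ[u,v]`. -/
abbrev FracK : Type := FractionRing (MvPolynomial (Fin 2) ℚ)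

/-- The image of the variable `u` in the field of fractions of `ℚ[u,v]`. -/
noncomputable def uK : FracK := algebraMap (MvPolynomial (Fin 2) ℚ) FracK (X 0)

/-- The image of the variable `v` in the field of fractions of `ℚ[u,v]`. -/
noncomputable def vK : FracK := algebraMap (MvPolynomial (Fin 2) ℚ) FracK (X 1)

/-- `cosh t = ∑_m t^{2m}/(2m)!` as a formal power series over `K`. -/
noncomputable def coshSeries : PowerSeries FracK :=
  PowerSeries.mk fun j => if Even j then ((j.factorial : FracK))⁻¹ else 0

/-- `sinh t = ∑_m t^{2m+1}/(2m+1)!` as a formal power series over `K`. -/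
noncomputable def sinhSeries : PowerSeries FracK :=
  PowerSeries.mk fun j => if Even j then 0 else ((j.factorial : FracK))⁻¹

open PowerSeries
open scoped Nat

/-! The series `∑ dⁿ(x) tⁿ/n!` is `exp(t d)(x)`, and `x ↦ exp(t d)(x)` is multiplicative by the
Leibniz rule. From `d v = v` and `d(v²) = 2v²` one gets `exp(t d)(v) = v eᵗ` and
`2 exp(t d)(u) = 2u - v² + v² e²ᵗ`, so that `u cosh t + (v² - u) sinh t = e⁻ᵗ exp(t d)(u)`.
Multiplying by `exp(t d)(u⁻¹v)` therefore gives `e⁻ᵗ exp(t d)(v) = v`. -/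

theorem PowerSeries.coeff_succ_eq_of_coeff_derivative_eq {R : Type*} [CommRing R] [Algebra ℚ R]
    {f g : R⟦X⟧} {n : ℕ} (h : coeff n (d⁄dX R f) = coeff n (d⁄dX R g)) :
    coeff (n + 1) f = coeff (n + 1) g := by
  have hunit : IsUnit ((n : R) + 1) := by
    simpa using (isUnit_iff_ne_zero.2 (Nat.cast_add_one_ne_zero n : (n : ℚ) + 1 ≠ 0)).map
      (algebraMap ℚ R)
  rw [coeff_derivative, coeff_derivative] at h
  exact hunit.mul_left_inj.1 h

theorem AddMonoidHom.iterate_apply_of_apply_eq_nsmul {M : Type*} [AddMonoid M] (D : M →+ M)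
    {c : ℕ} {y : M} (hy : D y = c • y) (n : ℕ) : D^[n] y = c ^ n • y := by
  induction n with
  | zero => simp
  | succ n ih => rw [Function.iterate_succ_apply', ih, map_nsmul, hy, smul_smul, pow_succ]

namespace AddMonoidHom

variable {R : Type*} [CommRing R] [Algebra ℚ R] (D : R →+ R)

noncomputable def expSeries (x : R) : R⟦X⟧ :=
  PowerSeries.mk fun n => algebraMap ℚ R (1 / n !) * D^[n] x

@[simp]
theorem coeff_expSeries (x : R) (n : ℕ) :
    coeff n (D.expSeries x) = algebraMap ℚ R (1 / n !) * D^[n] x :=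
  coeff_mk _ _

@[simp]
theorem constantCoeff_expSeries (x : R) : constantCoeff (D.expSeries x) = x := by
  simp [← coeff_zero_eq_constantCoeff_apply]

theorem expSeries_add (x y : R) : D.expSeries (x + y) = D.expSeries x + D.expSeries y := by
  ext n
  simp [iterate_map_add, mul_add]

theorem derivative_expSeries (x : R) : d⁄dX R (D.expSeries x) = D.expSeries (D x) := by
  ext n
  have hexp := congrArg (coeff n) (derivative_exp R)
  rw [coeff_derivative, coeff_exp, coeff_exp] at hexp
  rw [coeff_derivative, coeff_expSeries, coeff_expSeries, Function.iterate_succ_apply, ← hexp]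
  ring

theorem expSeries_mul (hD : ∀ x y, D (x * y) = x * D y + y * D x) (x y : R) :
    D.expSeries (x * y) = D.expSeries x * D.expSeries y := by
  ext n
  induction n generalizing x y with
  | zero => simp [coeff_zero_eq_constantCoeff]
  | succ n ih =>
    -- by `hD` and `derivative_expSeries`, both derivatives are sums of products covered by `ih`
    apply coeff_succ_eq_of_coeff_derivative_eq
    rw [derivative_expSeries, hD, Derivation.leibniz, derivative_expSeries,
      derivative_expSeries]
    simp only [smul_eq_mul, expSeries_add, map_add, ih]

theorem expSeries_of_apply_eq_nsmul {c : ℕ} {y : R} (hy : D y = c • y) :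
    D.expSeries y = PowerSeries.C y * rescale (c : R) (exp R) := by
  ext n
  rw [coeff_expSeries, PowerSeries.coeff_C_mul, coeff_rescale, coeff_exp,
    D.iterate_apply_of_apply_eq_nsmul hy, nsmul_eq_mul]
  push_cast
  ring

theorem nsmul_expSeries_of_apply_eq {c : ℕ} {x y : R} (hx : D x = y) (hy : D y = c • y) :
    c • D.expSeries x =
      PowerSeries.C (c • x - y) + PowerSeries.C y * rescale (c : R) (exp R) := by
  ext n
  rw [map_nsmul, map_add, coeff_expSeries, PowerSeries.coeff_C_mul, coeff_rescale, coeff_exp,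
    PowerSeries.coeff_C]
  cases n with
  | zero => simp
  | succ n =>
    rw [if_neg n.succ_ne_zero, Function.iterate_succ_apply, hx,
      D.iterate_apply_of_apply_eq_nsmul hy, nsmul_eq_mul, nsmul_eq_mul]
    push_cast
    ring

end AddMonoidHom

theorem two_mul_coshSeries : 2 * coshSeries = exp FracK + evalNegHom (exp FracK) := by
  ext n
  rw [evalNegHom, map_add, coeff_rescale, coeff_exp, coshSeries, ← map_ofNat PowerSeries.C,
    PowerSeries.coeff_C_mul, coeff_mk, one_div, map_inv₀, map_natCast]
  rcases n.even_or_odd with h | h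
  · rw [if_pos h, h.neg_one_pow]; ring
  · rw [if_neg (Nat.not_even_iff_odd.2 h), h.neg_one_pow]; ring

theorem two_mul_sinhSeries : 2 * sinhSeries = exp FracK - evalNegHom (exp FracK) := by
  ext n
  rw [evalNegHom, map_sub, coeff_rescale, coeff_exp, sinhSeries, ← map_ofNat PowerSeries.C,
    PowerSeries.coeff_C_mul, coeff_mk, one_div, map_inv₀, map_natCast]
  rcases n.even_or_odd with h | h
  · rw [if_pos h, h.neg_one_pow]; ring
  · rw [if_neg (Nat.not_even_iff_odd.2 h), h.neg_one_pow]; ring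

theorem C_mul_coshSeries_add_C_mul_sinhSeries (D : FracK →+ FracK) {x y : FracK}
    (hx : D x = y) (hy : D y = 2 • y) :
    PowerSeries.C x * coshSeries + PowerSeries.C (y - x) * sinhSeries =
      D.expSeries x * evalNegHom (exp FracK) := by
  have hexp := D.nsmul_expSeries_of_apply_eq hx hy
  rw [← exp_pow_eq_rescale_exp, nsmul_eq_mul, nsmul_eq_mul] at hexp
  have hinv := exp_mul_exp_neg_eq_one (A := FracK)
  have htwo : (2 : FracK⟦X⟧) ≠ 0 := by
    rw [← map_ofNat PowerSeries.C 2]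
    exact (map_ne_zero _).2 two_ne_zero
  apply mul_left_cancel₀ htwo
  simp only [map_sub, map_mul, map_ofNat, Nat.cast_ofNat] at hexp ⊢
  linear_combination PowerSeries.C x * two_mul_coshSeries +
    (PowerSeries.C y - PowerSeries.C x) * two_mul_sinhSeries - evalNegHom (exp FracK) * hexp -
    PowerSeries.C y * exp FracK * hinv

/-- `∑_{n≥0} dⁿ(u⁻¹v) tⁿ/n! = v / (u·cosh t + (v²-u)·sinh t)`, with the denominator
cleared. -/
theorem stmt15 (d : Derivation ℚ FracK FracK)
    (hu : d uK = vK ^ 2) (hv : d vK = vK) :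
    (PowerSeries.mk fun n => ((n.factorial : FracK))⁻¹ * (⇑d)^[n] (uK⁻¹ * vK)) *
        (PowerSeries.C uK * coshSeries +
         PowerSeries.C (vK ^ 2 - uK) * sinhSeries) =
      PowerSeries.C vK := by
  -- the `ℚ`-module structure in the type of `d` is not `Algebra.toModule`, so general lemmas
  -- about `Derivation ℚ R R` do not apply to `d`; its additive map is used instead
  set D : FracK →+ FracK := ↑d
  have hD : ∀ x y, D (x * y) = x * D y + y * D x := d.leibniz
  have huv : uK⁻¹ * vK * uK = vK := by
    have hu0 : uK ≠ 0 := by simp [uK]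
    field_simp
  have hv2 : D (vK ^ 2) = 2 • vK ^ 2 := by
    rw [pow_two, hD, show D vK = vK from hv, two_nsmul]
  have hseries : (PowerSeries.mk fun n => ((n.factorial : FracK))⁻¹ * (⇑d)^[n] (uK⁻¹ * vK)) =
      D.expSeries (uK⁻¹ * vK) := by
    ext n
    simp [D]
  rw [hseries, C_mul_coshSeries_add_C_mul_sinhSeries D hu hv2, ← mul_assoc,
    ← D.expSeries_mul hD, huv, D.expSeries_of_apply_eq_nsmul (c := 1) (by rw [one_smul]; exact hv),
    Nat.cast_one, rescale_one, RingHom.id_apply, mul_assoc, exp_mul_exp_neg_eq_one, mul_one]
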